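/- arXiv:2604.02092 — 9 statements merged into one kernel-verified Lean document; each statement's English description precedes it below -/
import Mathlib

section
/- Let n, ℓ ≥ 1 and let g : [ℕ]^n → {0,1} be a coloring with no g-homogeneous set for color 1 of size ℓ. Then there exists a stable coloring f : [ℕ]^{n+1} → {0,1} whose limit coloring is g and which has no f-homogeneous set for color 1 of size ℓ+1. -/
/-! Take `f t := g (t \ {max t})`. Then `f (s ∪ {y}) = g s` as soon as `y > max s`, so `f` is
stable with limit `g`; and if `H` were `f`-homogeneous for color 1 of size `ℓ + 1`, then
`H \ {max H}` would be `g`-homogeneous for color 1 of size `ℓ`, since every `n`-subset `t` of it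
gives `g t = f (t ∪ {max H})`. -/

namespace Finset

variable {α : Type*} [LinearOrder α] [OrderBot α]

def eraseSup (t : Finset α) : Finset α :=
  t.erase (t.sup id)

lemma sup_id_insert_of_forall_lt {s : Finset α} {y : α} (hy : ∀ x ∈ s, x < y) :
    (insert y s).sup id = y := by
  rw [sup_insert, id, sup_eq_left]
  exact Finset.sup_le fun x hx => (hy x hx).le

lemma eraseSup_insert_of_forall_lt {s : Finset α} {y : α} (hy : ∀ x ∈ s, x < y) :
    eraseSup (insert y s) = s := by
  rw [eraseSup, sup_id_insert_of_forall_lt hy, erase_insert fun h => lt_irrefl y (hy y h)]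

end Finset

open Finset

theorem stable_extension_of_bounded_coloring_general
    (n ℓ : ℕ)
    (g : Finset ℕ → Fin 2)
    (hg : ¬ ∃ H : Finset ℕ, H.card = ℓ ∧ ∀ t ⊆ H, t.card = n → g t = 1) :
    ∃ f : Finset ℕ → Fin 2,
      (∀ s : Finset ℕ, s.card = n →
        ∃ N : ℕ, ∀ y : ℕ, N ≤ y → (∀ x ∈ s, x < y) → f (insert y s) = g s) ∧
      ¬ ∃ H : Finset ℕ, H.card = ℓ + 1 ∧ ∀ t ⊆ H, t.card = n + 1 → f t = 1 := by
  refine ⟨g ∘ eraseSup, fun s _ => ⟨0, fun y _ hy => ?_⟩, ?_⟩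
  · exact congrArg g (eraseSup_insert_of_forall_lt hy)
  rintro ⟨H, hcard, hhom⟩
  have hH : H.Nonempty := card_pos.mp (by omega)
  set m := H.max' hH
  refine hg ⟨H.erase m, by rw [card_erase_of_mem (max'_mem H hH), hcard]; rfl,
    fun t ht htc => ?_⟩
  have hlt : ∀ x ∈ t, x < m := fun x hx => lt_max'_of_mem_erase_max' H hH (ht hx)
  have hmt : m ∉ t := fun hm => lt_irrefl m (hlt m hm)
  have hf := hhom (insert m t) (insert_subset (max'_mem H hH) (ht.trans (erase_subset _ _)))
    (by rw [card_insert_of_notMem hmt, htc])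
  rwa [Function.comp_apply, eraseSup_insert_of_forall_lt hlt] at hf

/-- If `g : [ℕ]^n → 2` has no homogeneous set for color 1 of size `ℓ`,
then there exists a stable coloring `f : [ℕ]^{n+1} → 2` whose limit coloring is `g`
(encoded by: for every `n`-element set `s`, `f (insert y s) = g s` for all sufficiently
large `y > max s`) and which has no homogeneous set for color 1 of size `ℓ+1`. -/
theorem stable_extension_of_bounded_coloring
    (n ℓ : ℕ) (hn : 1 ≤ n) (hℓ : 1 ≤ ℓ)
    (g : Finset ℕ → Fin 2)
    (hg : ¬ ∃ H : Finset ℕ, H.card = ℓ ∧ ∀ t ⊆ H, t.card = n → g t = 1) :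
    ∃ f : Finset ℕ → Fin 2,
      (∀ s : Finset ℕ, s.card = n →
        ∃ N : ℕ, ∀ y : ℕ, N ≤ y → (∀ x ∈ s, x < y) → f (insert y s) = g s) ∧
      ¬ ∃ H : Finset ℕ, H.card = ℓ + 1 ∧ ∀ t ⊆ H, t.card = n + 1 → f t = 1 :=
  stable_extension_of_bounded_coloring_general n ℓ g hg
end

section
/- Let n ≥ 1, k ≥ 1, and let f : [ℕ]^{n+1} → {0,…,k−1} be a coloring. For each s ∈ [ℕ]^n and each i < k, let R_{s,i} = { y ∈ ℕ : y > max s and f(s ∪ {y}) = i }. If C ⊆ ℕ is an infinite set which is cohesive for the family (R_{s,i})_{s ∈ [ℕ]^n, i < k}, then f is stable on C: for every s ∈ [C]^n, the value f(s ∪ {y}) is eventually constant as y ranges over the elements of C greater than max s. -/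
/-!
The colour classes `R_{s,i}`, `i < k`, together with the finitely many `y ≤ max s`, cover `C`.
Since `C` is infinite, cohesiveness cannot make every `C ∩ R_{s,i}` finite, so some
`C \ R_{s,i}` is finite, i.e. the colour `i` is eventually attained on `C`.
-/

open Filter

theorem Set.Infinite.exists_diff_finite_of_cohesive {α ι : Type*} [Finite ι] {C D : Set α}
    (hC : C.Infinite) (hD : (C \ D).Finite) (g : α → ι)
    (hcoh : ∀ i, (C \ {y | y ∈ D ∧ g y = i}).Finite ∨ (C ∩ {y | y ∈ D ∧ g y = i}).Finite) :
    ∃ i, (C \ {y | y ∈ D ∧ g y = i}).Finite := by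
  by_contra! hcofinite
  have hclasses : ∀ i, (C ∩ {y | y ∈ D ∧ g y = i}).Finite := fun i =>
    (hcoh i).resolve_left (hcofinite i)
  refine hC ((hD.union (Set.finite_iUnion hclasses)).subset fun y hy => ?_)
  by_cases hyD : y ∈ D
  · exact Or.inr (Set.mem_iUnion.2 ⟨g y, hy, hyD, rfl⟩)
  · exact Or.inl ⟨hy, hyD⟩

theorem Nat.exists_forall_ge_mem_of_diff_finite {C R : Set ℕ} (h : (C \ R).Finite) :
    ∃ N, ∀ y ∈ C, N ≤ y → y ∈ R := by
  have : ∀ᶠ y in atTop, y ∉ C \ R := Nat.cofinite_eq_atTop ▸ h.eventually_cofinite_notMem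
  obtain ⟨N, hN⟩ := eventually_atTop.1 this
  exact ⟨N, fun y hyC hNy => by simpa [hyC] using hN y hNy⟩

theorem Finset.finite_setOf_not_forall_lt (s : Finset ℕ) : {y | ¬ ∀ x ∈ s, x < y}.Finite := by
  have : ∀ᶠ y in atTop, ∀ x ∈ s, x < y :=
    (eventually_all_finset s).2 fun x _ => eventually_gt_atTop x
  rw [← Nat.cofinite_eq_atTop] at this
  exact this

theorem cohesive_makes_stable_general
    (n k : ℕ)
    (f : Finset ℕ → Fin k)
    (C : Set ℕ) (hCinf : C.Infinite)
    (hcoh : ∀ s : Finset ℕ, s.card = n → ∀ i : Fin k,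
      (C \ {y : ℕ | (∀ x ∈ s, x < y) ∧ f (insert y s) = i}).Finite ∨
      (C ∩ {y : ℕ | (∀ x ∈ s, x < y) ∧ f (insert y s) = i}).Finite) :
    ∀ s : Finset ℕ, ↑s ⊆ C → s.card = n →
      ∃ c : Fin k, ∃ N : ℕ, ∀ y ∈ C, N ≤ y → (∀ x ∈ s, x < y) →
        f (insert y s) = c := by
  intro s _ hs
  obtain ⟨c, hc⟩ := hCinf.exists_diff_finite_of_cohesive
    (s.finite_setOf_not_forall_lt.subset fun _ hy => hy.2) (fun y => f (insert y s)) (hcoh s hs)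
  obtain ⟨N, hN⟩ := Nat.exists_forall_ge_mem_of_diff_finite hc
  exact ⟨c, N, fun y hyC hNy _ => (hN y hyC hNy).2⟩

/-- If `C` is an infinite set cohesive for the family
`R_{s,i} = { y : y > max s ∧ f (insert y s) = i }` (for `s ∈ [ℕ]^n`, `i < k`),
then `f : [ℕ]^{n+1} → k` is stable on `C`: for every `n`-element subset `s` of `C`,
`f (insert y s)` is eventually constant as `y` ranges over elements of `C`
greater than `max s`. -/
theorem cohesive_makes_stable
    (n k : ℕ) (hn : 1 ≤ n) (hk : 1 ≤ k)
    (f : Finset ℕ → Fin k)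
    (C : Set ℕ) (hCinf : C.Infinite)
    (hcoh : ∀ s : Finset ℕ, s.card = n → ∀ i : Fin k,
      (C \ {y : ℕ | (∀ x ∈ s, x < y) ∧ f (insert y s) = i}).Finite ∨
      (C ∩ {y : ℕ | (∀ x ∈ s, x < y) ∧ f (insert y s) = i}).Finite) :
    ∀ s : Finset ℕ, ↑s ⊆ C → s.card = n →
      ∃ c : Fin k, ∃ N : ℕ, ∀ y ∈ C, N ≤ y → (∀ x ∈ s, x < y) →
        f (insert y s) = c :=
  cohesive_makes_stable_general n k f C hCinf hcoh
end

section
/- Let ℓ ≥ 1 and let f : [ℕ]² → {0,1} be a coloring with no f-homogeneous set for color 1 of size ℓ. Let S ⊆ ℕ be an infinite f-transitive set. For each a ∈ S, let g(a) be the maximal cardinality of a finite set F ⊆ S with max F = a that is f-homogeneous for color 1. Then: (i) 1 ≤ g(a) ≤ ℓ−1 for every a ∈ S; and (ii) every subset H ⊆ S on which g is constant is f-homogeneous for color 0. -/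
/-!
A color-1 homogeneous set `F ⊆ S` with maximum `x` can be extended by any `y > x` in `S` with
`f x y = 1`: for `u < x` in `F`, transitivity applied to `f u x = 1 = f x y` gives `f u y = 1`.
Hence `f x y = 1` forces `g y > g x`, so `g` cannot be constant on a pair of color 1. The bounds
`1 ≤ g a < ℓ` come from the candidate `{a}` and from the absence of color-1 homogeneous sets of
size `ℓ`.
-/

namespace Finset

variable {α β : Type*} [LinearOrder α]

def IsHomogeneous (f : α → α → β) (c : β) (F : Finset α) : Prop :=
  ∀ x ∈ F, ∀ y ∈ F, x < y → f x y = c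

theorem IsHomogeneous.mono {f : α → α → β} {c : β} {F G : Finset α}
    (hF : F.IsHomogeneous f c) (hGF : G ⊆ F) : G.IsHomogeneous f c :=
  fun x hx y hy hxy => hF x (hGF hx) y (hGF hy) hxy

theorem isHomogeneous_singleton (f : α → α → β) (c : β) (a : α) :
    ({a} : Finset α).IsHomogeneous f c := by
  intro x hx y hy hxy
  rw [mem_singleton] at hx hy
  exact absurd hxy (by rw [hx, hy]; exact lt_irrefl a)

theorem IsHomogeneous.card_lt {f : α → α → β} {c : β} {ℓ : ℕ}
    (hbd : ¬ ∃ F : Finset α, F.card = ℓ ∧ F.IsHomogeneous f c)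
    {F : Finset α} (hF : F.IsHomogeneous f c) : F.card < ℓ := by
  by_contra! hle
  obtain ⟨G, hGF, hGcard⟩ := exists_subset_card_eq hle
  exact hbd ⟨G, hGcard, hF.mono hGF⟩

theorem IsHomogeneous.insert_of_transitive {f : α → α → β} {c : β} {S : Set α}
    (htrans : ∀ x ∈ S, ∀ y ∈ S, ∀ z ∈ S, x < y → y < z →
      f x y = f y z → f x y = f x z)
    {F : Finset α} (hF : F.IsHomogeneous f c) (hFS : ↑F ⊆ S)
    {x y : α} (hxF : x ∈ F) (hFx : ∀ u ∈ F, u ≤ x) (hyS : y ∈ S) (hxy : x < y)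
    (hfxy : f x y = c) : (insert y F).IsHomogeneous f c := by
  have hto_y : ∀ u ∈ F, f u y = c := by
    intro u hu
    rcases (hFx u hu).lt_or_eq with hux | rfl
    · have hfux := hF u hu x hxF hux
      rw [← hfux, htrans u (hFS hu) x (hFS hxF) y hyS hux hxy (hfux.trans hfxy.symm)]
    · exact hfxy
  have hle_y : ∀ v ∈ insert y F, v ≤ y :=
    (forall_mem_insert _ _ _).2 ⟨le_rfl, fun v hv => (hFx v hv).trans hxy.le⟩
  intro u hu v hv huv
  rcases mem_insert.1 hu with rfl | hu
  · exact absurd huv (hle_y v hv).not_gt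
  · rcases mem_insert.1 hv with hvy | hv
    · exact hvy ▸ hto_y u hu
    · exact hF u hu v hv huv

end Finset

open Finset

theorem rank_function_on_transitive_set_general
    (ℓ : ℕ) (f : ℕ → ℕ → Fin 2)
    (hbd : ¬ ∃ F : Finset ℕ, F.card = ℓ ∧ ∀ x ∈ F, ∀ y ∈ F, x < y → f x y = 1)
    (S : Set ℕ)
    (htrans : ∀ x ∈ S, ∀ y ∈ S, ∀ z ∈ S, x < y → y < z →
      f x y = f y z → f x y = f x z)
    (g : ℕ → ℕ)
    (hg : ∀ a ∈ S,
      (∃ F : Finset ℕ, ↑F ⊆ S ∧ a ∈ F ∧ (∀ x ∈ F, x ≤ a) ∧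
        (∀ x ∈ F, ∀ y ∈ F, x < y → f x y = 1) ∧ F.card = g a) ∧
      (∀ F : Finset ℕ, ↑F ⊆ S → a ∈ F → (∀ x ∈ F, x ≤ a) →
        (∀ x ∈ F, ∀ y ∈ F, x < y → f x y = 1) → F.card ≤ g a)) :
    (∀ a ∈ S, 1 ≤ g a ∧ g a ≤ ℓ - 1) ∧
    (∀ H : Set ℕ, H ⊆ S → (∀ a ∈ H, ∀ b ∈ H, g a = g b) →
      ∀ x ∈ H, ∀ y ∈ H, x < y → f x y = 0) := by
  refine ⟨fun a ha => ?_, fun H hHS hconst x hx y hy hxy => ?_⟩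
  · obtain ⟨⟨F, -, -, -, hFhom, hFcard⟩, hmax⟩ := hg a ha
    have hone : ({a} : Finset ℕ).card ≤ g a :=
      hmax {a} (by simpa using ha) (mem_singleton_self a) (by simp)
        (isHomogeneous_singleton f 1 a)
    have hlt : F.card < ℓ := IsHomogeneous.card_lt hbd hFhom
    rw [card_singleton] at hone
    omega
  · by_contra hne
    obtain ⟨⟨F, hFS, hxF, hFx, hFhom, hFcard⟩, -⟩ := hg x (hHS hx)
    have hext : (insert y F).IsHomogeneous f 1 :=
      IsHomogeneous.insert_of_transitive htrans hFhom hFS hxF hFx (hHS hy) hxy (by omega)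
    have hyF : y ∉ F := fun h => (hFx y h).not_gt hxy
    have hcard := (hg y (hHS hy)).2 (insert y F)
      (by rw [coe_insert]; exact Set.insert_subset (hHS hy) hFS)
      (mem_insert_self y F) (by simpa using fun u hu => (hFx u hu).trans hxy.le) hext
    rw [card_insert_of_notMem hyF, hFcard, hconst x hx y hy] at hcard
    omega

/-- Let `f : [ℕ]² → 2` have no homogeneous set for color 1 of size `ℓ`,
and let `S` be an infinite `f`-transitive set. For `a ∈ S`, let `g a` be the maximal
cardinality of a finite `F ⊆ S` with `max F = a` which is `f`-homogeneous for color 1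
(encoded by `hg`). Then (i) `1 ≤ g a ≤ ℓ - 1` for every `a ∈ S`, and (ii) every
subset of `S` on which `g` is constant is `f`-homogeneous for color 0. -/
theorem rank_function_on_transitive_set
    (ℓ : ℕ) (hℓ : 1 ≤ ℓ) (f : ℕ → ℕ → Fin 2)
    (hbd : ¬ ∃ F : Finset ℕ, F.card = ℓ ∧ ∀ x ∈ F, ∀ y ∈ F, x < y → f x y = 1)
    (S : Set ℕ) (hSinf : S.Infinite)
    (htrans : ∀ x ∈ S, ∀ y ∈ S, ∀ z ∈ S, x < y → y < z →
      f x y = f y z → f x y = f x z)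
    (g : ℕ → ℕ)
    (hg : ∀ a ∈ S,
      (∃ F : Finset ℕ, ↑F ⊆ S ∧ a ∈ F ∧ (∀ x ∈ F, x ≤ a) ∧
        (∀ x ∈ F, ∀ y ∈ F, x < y → f x y = 1) ∧ F.card = g a) ∧
      (∀ F : Finset ℕ, ↑F ⊆ S → a ∈ F → (∀ x ∈ F, x ≤ a) →
        (∀ x ∈ F, ∀ y ∈ F, x < y → f x y = 1) → F.card ≤ g a)) :
    (∀ a ∈ S, 1 ≤ g a ∧ g a ≤ ℓ - 1) ∧
    (∀ H : Set ℕ, H ⊆ S → (∀ a ∈ H, ∀ b ∈ H, g a = g b) →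
      ∀ x ∈ H, ∀ y ∈ H, x < y → f x y = 0) :=
  rank_function_on_transitive_set_general ℓ f hbd S htrans g hg
end

section
/- Let ℓ ≥ 1 and let f : [ℕ]² → {0,1} be a coloring with no f-homogeneous set for color 1 of size ℓ. Then every infinite f-transitive set S ⊆ ℕ contains an infinite subset which is f-homogeneous for color 0. -/
/-!
Call a pair `x < y` of `S` a `1`-edge when `f x y = 1`. Transitivity of `S` makes the `1`-edges a
strict order on `S`: a `1`-homogeneous set with greatest element `x` stays `1`-homogeneous when a
point `y > x` with `f x y = 1` is added. Hence the size of the largest `1`-homogeneous subset of `S`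
with greatest element `x`, which is less than `ℓ`, strictly increases along `1`-edges. By
pigeonhole infinitely many points of `S` share this size, and no two of them form a `1`-edge.
-/

theorem Set.Infinite.exists_infinite_fiber_of_mapsTo {α β : Type*} {s : Set α} {t : Set β}
    {g : α → β} (hs : s.Infinite) (hg : Set.MapsTo g s t) (ht : t.Finite) :
    ∃ b ∈ t, (s ∩ g ⁻¹' {b}).Infinite := by
  by_contra! hfin
  refine hs ((ht.biUnion hfin).subset ?_)
  intro a ha
  exact Set.mem_biUnion (hg ha) ⟨ha, rfl⟩

namespace PairColoring

variable {α C : Type*} [LinearOrder α] (f : α → α → C)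

def IsHomogeneous (i : C) (H : Set α) : Prop :=
  ∀ x ∈ H, ∀ y ∈ H, x < y → f x y = i

def IsTransitiveOn (S : Set α) : Prop :=
  ∀ x ∈ S, ∀ y ∈ S, ∀ z ∈ S, x < y → y < z → f x y = f y z → f x y = f x z

variable {f}

theorem IsHomogeneous.mono {i : C} {H K : Set α} (hH : IsHomogeneous f i H) (hKH : K ⊆ H) :
    IsHomogeneous f i K :=
  fun x hx y hy => hH x (hKH hx) y (hKH hy)

theorem IsHomogeneous.card_lt {i : C} {ℓ : ℕ}
    (hbd : ¬ ∃ F : Finset α, F.card = ℓ ∧ IsHomogeneous f i ↑F) {F : Finset α}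
    (hF : IsHomogeneous f i ↑F) : F.card < ℓ := by
  by_contra! hℓ
  obtain ⟨G, hGF, hGc⟩ := Finset.exists_subset_card_eq hℓ
  exact hbd ⟨G, hGc, hF.mono hGF⟩

theorem IsTransitiveOn.isHomogeneous_insert {S F : Set α} {i : C} {x y : α}
    (htr : IsTransitiveOn f S) (hFS : F ⊆ S) (hxF : IsGreatest F x) (hF : IsHomogeneous f i F)
    (hy : y ∈ S) (hxy : x < y) (hfxy : f x y = i) : IsHomogeneous f i (insert y F) := by
  have hF_lt_y : ∀ a ∈ F, f a y = i := by
    intro a ha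
    rcases (hxF.2 ha).lt_or_eq with hax | rfl
    · have hfax : f a x = i := hF a ha x hxF.1 hax
      rw [← hfax, htr a (hFS ha) x (hFS hxF.1) y hy hax hxy (hfax.trans hfxy.symm)]
    · exact hfxy
  rintro a (rfl | ha) b (rfl | hb) hab
  · exact absurd hab (lt_irrefl _)
  · exact absurd ((hxF.2 hb).trans_lt hxy) hab.not_gt
  · exact hF_lt_y a ha
  · exact hF a ha b hb hab

section Rank

open Classical

variable (f)

def HasChainTo (i : C) (S : Set α) (x : α) (n : ℕ) : Prop :=
  ∃ F : Finset α, ↑F ⊆ S ∧ IsGreatest (↑F : Set α) x ∧ IsHomogeneous f i ↑F ∧ F.card = n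

/-- `Nat.findGreatest` returns `0` when nothing below the cap qualifies; the `+ 1` shift makes
`{x}` a witness for `0`, so for `x ∈ S` the value is always attained. -/
noncomputable def chainRank (i : C) (S : Set α) (ℓ : ℕ) (x : α) : ℕ :=
  Nat.findGreatest (fun n => HasChainTo f i S x (n + 1)) ℓ

theorem chainRank_le (i : C) (S : Set α) (ℓ : ℕ) (x : α) : chainRank f i S ℓ x ≤ ℓ :=
  Nat.findGreatest_le ℓ

theorem hasChainTo_chainRank_add_one {S : Set α} (i : C) (ℓ : ℕ) {x : α} (hx : x ∈ S) :
    HasChainTo f i S x (chainRank f i S ℓ x + 1) := by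
  refine Nat.findGreatest_spec (P := fun n => HasChainTo f i S x (n + 1)) (Nat.zero_le ℓ)
    ⟨{x}, by simpa using hx, by simp, fun a ha b hb hab => by simp_all, rfl⟩

variable {f}

theorem IsTransitiveOn.hasChainTo_succ {S : Set α} {i : C} {x y : α} {n : ℕ}
    (htr : IsTransitiveOn f S) (hx : HasChainTo f i S x n) (hy : y ∈ S) (hxy : x < y)
    (hfxy : f x y = i) : HasChainTo f i S y (n + 1) := by
  obtain ⟨F, hFS, hxF, hF, rfl⟩ := hx
  have hyF : y ∉ F := fun h => (hxF.2 h).not_gt hxy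
  refine ⟨insert y F, ?_, ?_, ?_, Finset.card_insert_of_notMem hyF⟩ <;> rw [Finset.coe_insert]
  · exact Set.insert_subset hy hFS
  · simpa [max_eq_left hxy.le] using hxF.insert y
  · exact htr.isHomogeneous_insert hFS hxF hF hy hxy hfxy

theorem IsTransitiveOn.chainRank_lt {S : Set α} {i : C} {ℓ : ℕ} {x y : α}
    (htr : IsTransitiveOn f S) (hbd : ¬ ∃ F : Finset α, F.card = ℓ ∧ IsHomogeneous f i ↑F)
    (hx : x ∈ S) (hy : y ∈ S) (hxy : x < y) (hfxy : f x y = i) :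
    chainRank f i S ℓ x < chainRank f i S ℓ y := by
  have hchain := htr.hasChainTo_succ (hasChainTo_chainRank_add_one f i ℓ hx) hy hxy hfxy
  have hle : chainRank f i S ℓ x + 1 ≤ ℓ := by
    obtain ⟨F, -, -, hF, hFc⟩ := hchain
    have := hF.card_lt hbd
    omega
  exact Nat.le_findGreatest hle hchain

end Rank

end PairColoring

theorem transitive_set_has_homogeneous_subset_general
    (ℓ : ℕ) (f : ℕ → ℕ → Fin 2)
    (hbd : ¬ ∃ F : Finset ℕ, F.card = ℓ ∧ ∀ x ∈ F, ∀ y ∈ F, x < y → f x y = 1)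
    (S : Set ℕ) (hSinf : S.Infinite)
    (htrans : ∀ x ∈ S, ∀ y ∈ S, ∀ z ∈ S, x < y → y < z →
      f x y = f y z → f x y = f x z) :
    ∃ H : Set ℕ, H ⊆ S ∧ H.Infinite ∧ ∀ x ∈ H, ∀ y ∈ H, x < y → f x y = 0 := by
  obtain ⟨k, -, hk⟩ := hSinf.exists_infinite_fiber_of_mapsTo
    (fun x _ => Finset.mem_coe.mpr (Finset.mem_range_succ_iff.mpr (PairColoring.chainRank_le f 1 S ℓ x)))
    (Finset.range (ℓ + 1)).finite_toSet
  refine ⟨_, Set.inter_subset_left, hk, fun x hx y hy hxy => ?_⟩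
  have hne : f x y ≠ 1 := fun h =>
    (PairColoring.IsTransitiveOn.chainRank_lt htrans hbd hx.1 hy.1 hxy h).ne (hx.2.trans hy.2.symm)
  omega

/-- If `f : [ℕ]² → 2` has no homogeneous set for color 1 of size `ℓ`,
then every infinite `f`-transitive set `S` contains an infinite subset which is
`f`-homogeneous for color 0. -/
theorem transitive_set_has_homogeneous_subset
    (ℓ : ℕ) (hℓ : 1 ≤ ℓ) (f : ℕ → ℕ → Fin 2)
    (hbd : ¬ ∃ F : Finset ℕ, F.card = ℓ ∧ ∀ x ∈ F, ∀ y ∈ F, x < y → f x y = 1)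
    (S : Set ℕ) (hSinf : S.Infinite)
    (htrans : ∀ x ∈ S, ∀ y ∈ S, ∀ z ∈ S, x < y → y < z →
      f x y = f y z → f x y = f x z) :
    ∃ H : Set ℕ, H ⊆ S ∧ H.Infinite ∧ ∀ x ∈ H, ∀ y ∈ H, x < y → f x y = 0 :=
  transitive_set_has_homogeneous_subset_general ℓ f hbd S hSinf htrans
end

section
/- Let k ≥ 1, let E ⊆ {0,…,k−1} × {0,…,k−1} be a digraph, let g : ℕ → {0,…,k−1}, and define f : [ℕ]² → {0,1} for x < y by f(x,y) = 1 if and only if (g(x), g(y)) ∈ E. Suppose H ⊆ ℕ is an infinite set such that for every x ∈ H, f(x,y) = 0 for all but finitely many y ∈ H. Let I = { i < k : { x ∈ H : g(x) = i } is infinite }. Then I is an independent set of E, i.e., (I × I) ∩ E = ∅. -/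
theorem not_rel_of_infinite_fiber {β α : Type*} [LinearOrder β] [LocallyFiniteOrderBot β]
    (R : α → α → Prop) (g : β → α) (H : Set β)
    (hfin : ∀ x ∈ H, {y | y ∈ H ∧ x < y ∧ R (g x) (g y)}.Finite) {i j : α}
    (hi : {x | x ∈ H ∧ g x = i}.Nonempty) (hj : {x | x ∈ H ∧ g x = j}.Infinite) :
    ¬ R i j := by
  rintro hij
  obtain ⟨x, hxH, rfl⟩ := hi
  obtain ⟨y, ⟨⟨hyH, rfl⟩, hy⟩, hxy⟩ := (hj.sdiff (hfin x hxH)).exists_gt x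
  exact hy ⟨hyH, hxy, hij⟩

theorem limit_colors_independent_general
    (k : ℕ) (E : Fin k → Fin k → Prop)
    (g : ℕ → Fin k) (f : ℕ → ℕ → Fin 2)
    (hf : ∀ x y : ℕ, x < y → (f x y = 1 ↔ E (g x) (g y)))
    (H : Set ℕ)
    (hlim : ∀ x ∈ H, {y : ℕ | y ∈ H ∧ x < y ∧ f x y ≠ 0}.Finite) :
    ∀ i j : Fin k, {x : ℕ | x ∈ H ∧ g x = i}.Infinite →
      {x : ℕ | x ∈ H ∧ g x = j}.Infinite → ¬ E i j := by
  intro i j hi hj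
  refine not_rel_of_infinite_fiber E g H (fun x hx ↦ (hlim x hx).subset ?_) hi.nonempty hj
  rintro y ⟨hyH, hxy, hE⟩
  exact ⟨hyH, hxy, fun h0 ↦ by simpa [h0] using (hf x y hxy).mpr hE⟩

/-- Let `E` be a digraph on `{0,…,k-1}`, `g : ℕ → Fin k`, and
`f(x,y) = 1 ↔ (g x, g y) ∈ E` (for `x < y`). If `H` is infinite and every `x ∈ H`
satisfies `f x y = 0` for all but finitely many `y ∈ H`, then
`I = { i : { x ∈ H : g x = i } is infinite }` is independent in `E`. -/
theorem limit_colors_independent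
    (k : ℕ) (hk : 1 ≤ k) (E : Fin k → Fin k → Prop)
    (g : ℕ → Fin k) (f : ℕ → ℕ → Fin 2)
    (hf : ∀ x y : ℕ, x < y → (f x y = 1 ↔ E (g x) (g y)))
    (H : Set ℕ) (hHinf : H.Infinite)
    (hlim : ∀ x ∈ H, {y : ℕ | y ∈ H ∧ x < y ∧ f x y ≠ 0}.Finite) :
    ∀ i j : Fin k, {x : ℕ | x ∈ H ∧ g x = i}.Infinite →
      {x : ℕ | x ∈ H ∧ g x = j}.Infinite → ¬ E i j :=
  limit_colors_independent_general k E g f hf H hlim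
end

section
/- For every k ∈ ℕ there exists L ∈ ℕ such that for every ℓ ≥ L there is a simple graph on k·(ℓ−1)+1 vertices which is triangle-free and has no independent set of size ℓ. -/
/-!
Erdős's deletion argument. Label the pairs of `2n` vertices uniformly at random by `Fin (d + 1)`
and join the pairs labelled `0`: this is the random graph `G(2n, 1/(d+1))`, and we take
`d ≈ ℓ / (4k + 6)`. The expected number of triangles is below `(n + 1) / 2` and the expected
number of independent `ℓ`-sets is at most `2^(2n) (d/(d+1))^(ℓ choose 2) ≤ 1/2`, so some labelling
has at most `n` triangles and no independent `ℓ`-set. Deleting one vertex from each triangle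
leaves a triangle-free graph on at least `n` vertices, and deleting vertices creates no
independent sets. Expectations appear as sums over all labellings, scaled by powers of `d + 1`
so that everything stays in `ℕ`.
-/

open Finset Fintype

theorem card_filter_forall_mem_mul_pow {α β : Type*} [Fintype α] [DecidableEq α] [Fintype β]
    (s : Finset α) (P : β → Prop) [DecidablePred P] :
    #{ω : α → β | ∀ a ∈ s, P (ω a)} * card β ^ #s = #{b | P b} ^ #s * card β ^ card α := by
  have hpi : ({ω : α → β | ∀ a ∈ s, P (ω a)} : Finset _) =
      piFinset fun a => if a ∈ s then ({b | P b} : Finset β) else univ := by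
    ext ω
    simp only [mem_filter, mem_univ, true_and, mem_piFinset]
    refine ⟨fun h a => ?_, fun h a ha => by simpa [ha] using h a⟩
    split_ifs with ha
    · simpa using h a ha
    · exact mem_univ _
  have hs : ({a | a ∈ s} : Finset α) = s := by ext; simp
  have hsc : ({a | a ∉ s} : Finset α) = sᶜ := by ext; simp
  rw [hpi, card_piFinset, ← card_add_card_compl s, pow_add]
  simp only [apply_ite Finset.card, prod_ite, prod_const, card_univ, hs, hsc]
  ring

namespace SimpleGraph

section

variable {V : Type*} [DecidableEq V]

theorem isClique_fromEdgeSet_iff (S : Set (Sym2 V)) (s : Finset V) :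
    (fromEdgeSet S).IsClique (s : Set V) ↔ ∀ e ∈ s.offDiag.image Sym2.mk.uncurry, e ∈ S := by
  simp only [isClique_iff, Set.Pairwise, mem_image, mem_offDiag, fromEdgeSet_adj, mem_coe]
  constructor
  · rintro h _ ⟨⟨a, b⟩, ⟨ha, hb, hab⟩, rfl⟩
    exact (h ha hb hab).1
  · intro h a ha b hb hab
    exact ⟨h _ ⟨(a, b), ⟨ha, hb, hab⟩, rfl⟩, hab⟩

theorem isClique_compl_fromEdgeSet_iff (S : Set (Sym2 V)) (s : Finset V) :
    (fromEdgeSet S)ᶜ.IsClique (s : Set V) ↔ ∀ e ∈ s.offDiag.image Sym2.mk.uncurry, e ∉ S := by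
  simp only [isClique_iff, Set.Pairwise, mem_image, mem_offDiag, compl_adj, fromEdgeSet_adj,
    mem_coe]
  constructor
  · rintro h _ ⟨⟨a, b⟩, ⟨ha, hb, hab⟩, rfl⟩ he
    exact (h ha hb hab).2 ⟨he, hab⟩
  · intro h a ha b hb hab
    exact ⟨hab, fun he => h _ ⟨(a, b), ⟨ha, hb, hab⟩, rfl⟩ he.1⟩

end

variable {V : Type*} [Fintype V] [DecidableEq V]

theorem sum_card_cliqueFinset_mul {Ω : Type*} [Fintype Ω] (H : Ω → SimpleGraph V)
    [∀ ω, DecidableRel (H ω).Adj] {r M c : ℕ}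
    (h : ∀ s : Finset V, #s = r → #{ω | (H ω).IsClique (s : Set V)} * M = c) :
    (∑ ω, #((H ω).cliqueFinset r)) * M = (card V).choose r * c := by
  have hcliques : ∀ ω, (H ω).cliqueFinset r =
      (powersetCard r univ).filter fun s : Finset V => (H ω).IsClique (s : Set V) := by
    intro ω; ext s; simp [isNClique_iff, and_comm]
  simp only [hcliques, card_filter]
  rw [sum_comm, sum_mul]
  simp only [← card_filter]
  rw [sum_congr rfl fun s hs => h s (mem_powersetCard_univ.mp hs), sum_const, card_powersetCard,
    card_univ, smul_eq_mul]

theorem exists_embedding_cliqueFree_comap (G : SimpleGraph V) [DecidableRel G.Adj] {r n : ℕ}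
    (hr : 0 < r) (h : #(G.cliqueFinset r) + n ≤ card V) :
    ∃ f : Fin n ↪ V, (G.comap f).CliqueFree r := by
  have hne : ∀ t ∈ G.cliqueFinset r, ∃ v, v ∈ t := fun t ht =>
    card_pos.mp ((mem_cliqueFinset_iff.mp ht).card_eq ▸ hr)
  choose pick hpick using hne
  set D := (G.cliqueFinset r).attach.image fun t => pick t.1 t.2
  have hD : n ≤ #Dᶜ := by
    have : #D ≤ #(G.cliqueFinset r) := card_image_le.trans_eq card_attach
    rw [card_compl]; omega
  obtain ⟨R, hRD, hR⟩ := exists_subset_card_eq hD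
  let f : Fin n ↪ V :=
    ((finCongr hR.symm).trans R.equivFin.symm).toEmbedding.trans (Function.Embedding.subtype _)
  refine ⟨f, fun t ht => ?_⟩
  have hclique : t.map f ∈ G.cliqueFinset r :=
    mem_cliqueFinset_iff.mpr ((ht.map).mono (map_comap_le f G))
  have hpickR : pick _ hclique ∈ R := by
    obtain ⟨a, -, ha⟩ := mem_map.mp (hpick _ hclique)
    rw [← ha]
    exact (R.equivFin.symm (finCongr hR.symm a)).2
  exact mem_compl.mp (hRD hpickR) (mem_image_of_mem _ (mem_attach _ ⟨_, hclique⟩))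

variable {d : ℕ}

theorem card_isClique_fromEdgeSet_mul_pow (s : Finset V) :
    #{ω : Sym2 V → Fin (d + 1) | (fromEdgeSet {e | ω e = 0}).IsClique (s : Set V)} *
      (d + 1) ^ (#s).choose 2 = (d + 1) ^ card (Sym2 V) := by
  simp only [isClique_fromEdgeSet_iff, Set.mem_ofPred_eq]
  have := card_filter_forall_mem_mul_pow (s.offDiag.image Sym2.mk.uncurry)
    (β := Fin (d + 1)) (· = 0)
  rwa [filter_eq', if_pos (mem_univ _), card_singleton, one_pow, one_mul, Fintype.card_fin,
    Sym2.card_image_offDiag] at this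

theorem card_isClique_compl_fromEdgeSet_mul_pow (s : Finset V) :
    #{ω : Sym2 V → Fin (d + 1) | (fromEdgeSet {e | ω e = 0})ᶜ.IsClique (s : Set V)} *
      (d + 1) ^ (#s).choose 2 = d ^ (#s).choose 2 * (d + 1) ^ card (Sym2 V) := by
  simp only [isClique_compl_fromEdgeSet_iff, Set.mem_ofPred_eq]
  have := card_filter_forall_mem_mul_pow (s.offDiag.image Sym2.mk.uncurry)
    (β := Fin (d + 1)) (· ≠ 0)
  rwa [filter_ne', card_erase_of_mem (mem_univ _), card_univ, Fintype.card_fin,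
    Nat.add_sub_cancel, Sym2.card_image_offDiag] at this

theorem exists_cliqueFree_three_compl_cliqueFree {n t ℓ d : ℕ}
    (htri : 2 * (n + t).choose 3 < (t + 1) * (d + 1) ^ 3)
    (hind : 2 * (n + t).choose ℓ * d ^ ℓ.choose 2 ≤ (d + 1) ^ ℓ.choose 2) :
    ∃ H : SimpleGraph (Fin n), H.CliqueFree 3 ∧ Hᶜ.CliqueFree ℓ := by
  let G : (Sym2 (Fin (n + t)) → Fin (d + 1)) → SimpleGraph (Fin (n + t)) :=
    fun ω => fromEdgeSet {e | ω e = 0}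
  set c := ℓ.choose 2
  set E := card (Sym2 (Fin (n + t)))
  have htriangles :
      (∑ ω, #((G ω).cliqueFinset 3)) * (d + 1) ^ 3 = (n + t).choose 3 * (d + 1) ^ E := by
    simpa using sum_card_cliqueFinset_mul G fun s hs => by
      simpa [hs] using card_isClique_fromEdgeSet_mul_pow (d := d) s
  have hindep : (∑ ω, #((G ω)ᶜ.cliqueFinset ℓ)) * (d + 1) ^ c =
      (n + t).choose ℓ * (d ^ c * (d + 1) ^ E) := by
    simpa using sum_card_cliqueFinset_mul (fun ω => (G ω)ᶜ) fun s hs => by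
      simpa [hs] using card_isClique_compl_fromEdgeSet_mul_pow (d := d) s
  -- Weighting independent sets by `t + 1`, one averaging step yields both `≤ t` triangles and
  -- no independent `ℓ`-set.
  obtain ⟨ω, -, hω⟩ : ∃ ω ∈ univ,
      (#((G ω).cliqueFinset 3) + (t + 1) * #((G ω)ᶜ.cliqueFinset ℓ)) *
        ((d + 1) ^ 3 * (d + 1) ^ c) < (t + 1) * ((d + 1) ^ 3 * (d + 1) ^ c) := by
    apply exists_lt_of_sum_lt
    have hsplit : ∑ ω, (#((G ω).cliqueFinset 3) + (t + 1) * #((G ω)ᶜ.cliqueFinset ℓ)) *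
        ((d + 1) ^ 3 * (d + 1) ^ c) =
          (∑ ω, #((G ω).cliqueFinset 3)) * (d + 1) ^ 3 * (d + 1) ^ c +
          (t + 1) * ((∑ ω, #((G ω)ᶜ.cliqueFinset ℓ)) * (d + 1) ^ c) * (d + 1) ^ 3 := by
      simp only [add_mul, sum_add_distrib, ← sum_mul, ← mul_sum]; ring
    rw [hsplit, htriangles, hindep, sum_const, card_univ, Fintype.card_fun, Fintype.card_fin,
      smul_eq_mul]
    have hpos : 0 < (d + 1) ^ E * (d + 1) ^ c := by positivity
    nlinarith [Nat.mul_lt_mul_of_pos_right htri hpos,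
      Nat.mul_le_mul_right ((t + 1) * (d + 1) ^ 3 * (d + 1) ^ E) hind]
  have hcount := Nat.lt_of_mul_lt_mul_right hω
  have hfree : (G ω)ᶜ.CliqueFree ℓ := by
    rw [← cliqueFinset_eq_empty_iff, ← card_eq_zero]
    nlinarith
  obtain ⟨f, hf⟩ := exists_embedding_cliqueFree_comap (G ω) (r := 3) (n := n) (by norm_num)
    (by rw [Fintype.card_fin]; nlinarith)
  exact ⟨(G ω).comap f, hf,
    hfree.comap (Embedding.complEquiv (Embedding.comap f (G ω))).isContained⟩

end SimpleGraph

theorem two_mul_pow_self_le_succ_pow {d : ℕ} (hd : 0 < d) : 2 * d ^ d ≤ (d + 1) ^ d := by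
  have hbern : (2 : ℚ) ≤ (1 + 1 / d) ^ d := by
    have := one_add_mul_le_pow (a := (1 / d : ℚ))
      (by linarith [show (0 : ℚ) ≤ 1 / d by positivity]) d
    rwa [mul_one_div_cancel (by positivity), one_add_one_eq_two] at this
  have : ((d + 1 : ℕ) : ℚ) ^ d = (d : ℚ) ^ d * (1 + 1 / d) ^ d := by
    rw [← mul_pow, mul_add, mul_one_div_cancel (by positivity)]; push_cast; ring
  exact_mod_cast (show (2 * d ^ d : ℚ) ≤ ((d + 1 : ℕ) : ℚ) ^ d by
    rw [this, mul_comm]; gcongr)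

theorem two_pow_mul_pow_le_succ_pow {q d c : ℕ} (hd : 0 < d) (h : q * d ≤ c) :
    2 ^ q * d ^ c ≤ (d + 1) ^ c := by
  obtain ⟨r, rfl⟩ := Nat.exists_eq_add_of_le h
  calc 2 ^ q * d ^ (q * d + r) = (2 * d ^ d) ^ q * d ^ r := by ring
    _ ≤ ((d + 1) ^ d) ^ q * (d + 1) ^ r := by
        gcongr
        · exact two_mul_pow_self_le_succ_pow hd
        · omega
    _ = (d + 1) ^ (q * d + r) := by ring

theorem two_mul_choose_three_lt {n m : ℕ} (hn : 0 < n) (h : 16 * n ^ 2 ≤ m ^ 3) :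
    2 * (n + n).choose 3 < (n + 1) * m ^ 3 :=
  calc 2 * (n + n).choose 3 ≤ 2 * (n + n) ^ 3 := by gcongr; exact Nat.choose_le_pow _ _
    _ = n * (16 * n ^ 2) := by ring
    _ < (n + 1) * (16 * n ^ 2) := by gcongr; omega
    _ ≤ (n + 1) * m ^ 3 := by gcongr

theorem sixteen_mul_sq_le_cube {k ℓ : ℕ} (hℓ : 16 * (k + 1) ^ 2 * (4 * k + 6) ^ 3 ≤ ℓ) :
    16 * (k * (ℓ - 1) + 1) ^ 2 ≤ (ℓ / (4 * k + 6) + 1) ^ 3 := by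
  set a := 4 * k + 6
  have hn : k * (ℓ - 1) + 1 ≤ (k + 1) * ℓ := by
    have : k * (ℓ - 1) ≤ k * ℓ := Nat.mul_le_mul_left k (Nat.sub_le ℓ 1)
    have : 1 ≤ ℓ := le_trans (Nat.one_le_iff_ne_zero.mpr (by positivity)) hℓ
    rw [add_mul, one_mul]; omega
  have hlow : 16 * (k * (ℓ - 1) + 1) ^ 2 * a ^ 3 ≤ ℓ ^ 3 :=
    calc 16 * (k * (ℓ - 1) + 1) ^ 2 * a ^ 3 ≤ 16 * ((k + 1) * ℓ) ^ 2 * a ^ 3 := by gcongr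
      _ = 16 * (k + 1) ^ 2 * a ^ 3 * ℓ ^ 2 := by ring
      _ ≤ ℓ * ℓ ^ 2 := by gcongr
      _ = ℓ ^ 3 := by ring
  have hup : ℓ ^ 3 < (ℓ / a + 1) ^ 3 * a ^ 3 := by
    rw [← mul_pow, mul_comm]
    exact Nat.pow_lt_pow_left (Nat.lt_mul_div_succ ℓ (by omega)) (by norm_num)
  exact (Nat.lt_of_mul_lt_mul_right (hlow.trans_lt hup)).le

theorem mul_div_le_choose_two {k ℓ : ℕ} (hℓ : 2 ≤ ℓ) :
    (2 * (k * (ℓ - 1) + 1) + 1) * (ℓ / (4 * k + 6)) ≤ ℓ.choose 2 := by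
  obtain ⟨m, rfl⟩ : ∃ m, ℓ = m + 1 := ⟨ℓ - 1, by omega⟩
  set d := (m + 1) / (4 * k + 6)
  have hchoose : (m + 1) * m = (m + 1).choose 2 * 2 := by
    simpa using Nat.add_one_mul_choose_eq m 1
  have hd : d * (4 * k + 6) ≤ m + 1 := Nat.div_mul_le_self _ _
  have hm : 2 * (k * m + 1) + 1 ≤ (2 * k + 3) * m := by nlinarith
  rw [Nat.add_sub_cancel]
  nlinarith [Nat.mul_le_mul_right d hm, Nat.mul_le_mul_left m hd]

/-- Erdős: For every `k` there exists `L` such that for every `ℓ ≥ L`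
there is a triangle-free simple graph on `k·(ℓ-1)+1` vertices with no independent
set of size `ℓ`. -/
theorem erdos_triangle_free_graphs :
    ∀ k : ℕ, ∃ L : ℕ, ∀ ℓ : ℕ, L ≤ ℓ →
      ∃ G : SimpleGraph (Fin (k * (ℓ - 1) + 1)), G.CliqueFree 3 ∧
        ¬ ∃ S : Finset (Fin (k * (ℓ - 1) + 1)), S.card = ℓ ∧
          ∀ u ∈ S, ∀ v ∈ S, ¬ G.Adj u v := by
  intro k
  refine ⟨16 * (k + 1) ^ 2 * (4 * k + 6) ^ 3, fun ℓ hℓ => ?_⟩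
  set n := k * (ℓ - 1) + 1
  set d := ℓ / (4 * k + 6)
  have ha : 4 * k + 6 ≤ ℓ :=
    calc 4 * k + 6 ≤ (4 * k + 6) ^ 3 := Nat.le_self_pow (by norm_num) _
      _ ≤ 16 * (k + 1) ^ 2 * (4 * k + 6) ^ 3 := Nat.le_mul_of_pos_left _ (by positivity)
      _ ≤ ℓ := hℓ
  have hd : 0 < d := Nat.div_pos ha (by omega)
  have hindep : 2 * (n + n).choose ℓ * d ^ ℓ.choose 2 ≤ (d + 1) ^ ℓ.choose 2 :=
    calc 2 * (n + n).choose ℓ * d ^ ℓ.choose 2 ≤ 2 ^ (2 * n + 1) * d ^ ℓ.choose 2 := by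
          rw [pow_succ, two_mul n, mul_comm (2 ^ _)]
          gcongr
          exact Nat.choose_le_two_pow _ _
      _ ≤ (d + 1) ^ ℓ.choose 2 :=
          two_pow_mul_pow_le_succ_pow hd (mul_div_le_choose_two (by omega))
  obtain ⟨H, hH3, hHℓ⟩ := SimpleGraph.exists_cliqueFree_three_compl_cliqueFree
    (two_mul_choose_three_lt (by omega) (sixteen_mul_sq_le_cube hℓ)) hindep
  exact ⟨H, hH3, fun ⟨S, hS, hSindep⟩ =>
    hHℓ S (H.isNClique_compl.mpr ⟨fun u hu v hv _ => hSindep u hu v hv, hS⟩)⟩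
end

section
/- Let f : [ℕ]² → {0,1} be a stable coloring. If the set { x ∈ ℕ : lim_y f(x,y) = 1 } is infinite, then there exists an infinite set H ⊆ ℕ which is f-homogeneous for color 1. -/
open Filter

/-- Greedy choice: each new term lies in `S` beyond the threshold from which the previous term is
`R`-related to everything, and thresholds only need to be met once since `R x` holds eventually. -/
theorem Set.Infinite.exists_strictMono_rel_of_eventually {S : Set ℕ} (hS : S.Infinite)
    {R : ℕ → ℕ → Prop} (hR : ∀ x ∈ S, ∀ᶠ y in atTop, R x y) :
    ∃ a : ℕ → ℕ, StrictMono a ∧ ∀ m n, m < n → R (a m) (a n) := by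
  choose! N hN using fun x hx => eventually_atTop.1 (hR x hx)
  choose next hnextS hnext_gt using fun m => hS.exists_gt m
  let a : ℕ → ℕ := fun n => Nat.rec (next 0) (fun _ x => next (max x (N x))) n
  have ha_mem : ∀ n, a n ∈ S := by
    rintro (_ | _) <;> exact hnextS _
  have ha_succ : ∀ n, a n < a (n + 1) ∧ N (a n) < a (n + 1) := fun n =>
    max_lt_iff.1 (hnext_gt _)
  have ha_mono : StrictMono a := strictMono_nat_of_lt_succ fun n => (ha_succ n).1
  refine ⟨a, ha_mono, fun m n hmn => hN _ (ha_mem m) _ ?_⟩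
  calc N (a m) ≤ a (m + 1) := (ha_succ m).2.le
    _ ≤ a n := ha_mono.monotone hmn

theorem stable_limit_one_gives_homogeneous_general
    (f : ℕ → ℕ → Fin 2)
    (hinf : {x : ℕ | ∃ N : ℕ, ∀ y : ℕ, N ≤ y → x < y → f x y = 1}.Infinite) :
    ∃ H : Set ℕ, H.Infinite ∧ ∀ x ∈ H, ∀ y ∈ H, x < y → f x y = 1 := by
  obtain ⟨a, ha_mono, ha_rel⟩ :=
    hinf.exists_strictMono_rel_of_eventually fun _ hx => eventually_atTop.2 hx
  refine ⟨Set.range a, Set.infinite_range_of_injective ha_mono.injective, ?_⟩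
  rintro _ ⟨m, rfl⟩ _ ⟨n, rfl⟩ hlt
  exact ha_rel m n (ha_mono.lt_iff_lt.1 hlt) hlt

/-- If `f : [ℕ]² → 2` is stable and `{ x : lim_y f(x,y) = 1 }` is
infinite, then there is an infinite set homogeneous for color 1. -/
theorem stable_limit_one_gives_homogeneous
    (f : ℕ → ℕ → Fin 2)
    (hstab : ∀ x : ℕ, ∃ c : Fin 2, ∃ N : ℕ, ∀ y : ℕ, N ≤ y → x < y → f x y = c)
    (hinf : {x : ℕ | ∃ N : ℕ, ∀ y : ℕ, N ≤ y → x < y → f x y = 1}.Infinite) :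
    ∃ H : Set ℕ, H.Infinite ∧ ∀ x ∈ H, ∀ y ∈ H, x < y → f x y = 1 :=
  stable_limit_one_gives_homogeneous_general f hinf
end

section
/- Let k ≥ 2 and let f : [ℕ]² → {0,1} be a coloring with no f-homogeneous set for color 1 of size k. Let T be a finite f-tree and let y ∈ ℕ be strictly greater than every entry of every sequence in T. Let σ ∈ T be a node of maximal length among nodes τ ∈ T of length < k−1 such that range(τ) ∪ {y} is f-homogeneous for color 1 (such a node exists, since the empty sequence qualifies). Then for every x ∈ ℕ with σ⌢x ∈ T, we have f(x,y) = 0. -/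
/-! If `f x y = 1`, then `σ⌢x` is again a node all of whose entries have colour 1 with `y`,
so by maximality of `σ` it has length `k - 1`; appending `y`, which exceeds all its
entries, yields an increasing sequence of length `k` with all pairs of colour 1, whose
range is a forbidden homogeneous set of size `k`. -/

theorem List.Pairwise.rel_of_mem_of_lt {α : Type*} [LinearOrder α] {r : α → α → Prop}
    {l : List α} (h : l.Pairwise fun a b => a < b ∧ r a b) {a b : α} (ha : a ∈ l)
    (hb : b ∈ l) (hab : a < b) : r a b := by
  induction l with
  | nil => simp at ha
  | cons c l ih =>
    rw [List.pairwise_cons] at h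
    rcases List.mem_cons.1 ha with rfl | hal <;> rcases List.mem_cons.1 hb with rfl | hbl
    · exact absurd hab (lt_irrefl _)
    · exact (h.1 b hbl).2
    · exact absurd (h.1 a hal).1 hab.not_gt
    · exact ih h.2 hal hbl

theorem List.Pairwise.exists_finset_card_eq_length {α : Type*} [LinearOrder α]
    {r : α → α → Prop} {l : List α} (h : l.Pairwise fun a b => a < b ∧ r a b) :
    ∃ F : Finset α, F.card = l.length ∧ ∀ a ∈ F, ∀ b ∈ F, a < b → r a b :=
  ⟨l.toFinset, List.toFinset_card_of_nodup (h.imp fun hab => hab.1.ne),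
    fun _ ha _ hb => h.rel_of_mem_of_lt (List.mem_toFinset.1 ha) (List.mem_toFinset.1 hb)⟩

theorem maximal_node_extension_color_zero_general
    (k : ℕ) (f : ℕ → ℕ → Fin 2)
    (hbd : ¬ ∃ F : Finset ℕ, F.card = k ∧ ∀ x ∈ F, ∀ y ∈ F, x < y → f x y = 1)
    (T : Set (List ℕ))
    (hTtree : ∀ σ ∈ T, List.Pairwise (fun a b => a < b ∧ f a b = 1) σ)
    (y : ℕ) (hy : ∀ σ ∈ T, ∀ x ∈ σ, x < y)
    (σ : List ℕ) (hσlen : σ.length < k - 1)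
    (hσhom : ∀ x ∈ σ, f x y = 1)
    (hσmax : ∀ τ ∈ T, τ.length < k - 1 → (∀ x ∈ τ, f x y = 1) →
      τ.length ≤ σ.length) :
    ∀ x : ℕ, σ ++ [x] ∈ T → f x y = 0 := by
  intro x hxT
  by_contra hx0
  have hx1 : f x y = 1 := by omega
  have hxσy : ∀ a ∈ σ ++ [x], f a y = 1 := by
    simpa [or_imp, forall_and, hx1] using hσhom
  have hlen : (σ ++ [x]).length = k - 1 := by
    have hmax := hσmax _ hxT
    simp only [List.length_append, List.length_singleton] at hmax ⊢
    by_contra hne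
    exact absurd (hmax (by omega) hxσy) (by omega)
  have hchain : (σ ++ [x] ++ [y]).Pairwise (fun a b => a < b ∧ f a b = 1) :=
    List.pairwise_append.2 ⟨hTtree _ hxT, List.pairwise_singleton _ _,
      fun a ha b hb => by
        rw [List.mem_singleton.1 hb]
        exact ⟨hy _ hxT a ha, hxσy a ha⟩⟩
  obtain ⟨F, hFcard, hF⟩ := hchain.exists_finset_card_eq_length
  refine hbd ⟨F, ?_, hF⟩
  simp only [hFcard, List.length_append, hlen, List.length_singleton]
  omega

/-- Let `f : [ℕ]² → 2` have no homogeneous set for color 1 of size `k`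
(`k ≥ 2`), let `T` be a finite `f`-tree (a nonempty, prefix-closed, finite set of
strictly increasing sequences whose ranges are `f`-homogeneous for color 1), and let
`y` be greater than every entry of every sequence of `T`. If `σ ∈ T` has maximal
length among nodes `τ ∈ T` of length `< k-1` with `range τ ∪ {y}` `f`-homogeneous
for color 1, then `f x y = 0` whenever `σ⌢x ∈ T`. -/
theorem maximal_node_extension_color_zero
    (k : ℕ) (hk : 2 ≤ k) (f : ℕ → ℕ → Fin 2)
    (hbd : ¬ ∃ F : Finset ℕ, F.card = k ∧ ∀ x ∈ F, ∀ y ∈ F, x < y → f x y = 1)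
    (T : Set (List ℕ)) (hTfin : T.Finite) (hTne : T.Nonempty)
    (hTpc : ∀ σ ∈ T, ∀ τ : List ℕ, τ <+: σ → τ ∈ T)
    (hTtree : ∀ σ ∈ T, List.Pairwise (fun a b => a < b ∧ f a b = 1) σ)
    (y : ℕ) (hy : ∀ σ ∈ T, ∀ x ∈ σ, x < y)
    (σ : List ℕ) (hσT : σ ∈ T) (hσlen : σ.length < k - 1)
    (hσhom : ∀ x ∈ σ, f x y = 1)
    (hσmax : ∀ τ ∈ T, τ.length < k - 1 → (∀ x ∈ τ, f x y = 1) →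
      τ.length ≤ σ.length) :
    ∀ x : ℕ, σ ++ [x] ∈ T → f x y = 0 :=
  maximal_node_extension_color_zero_general k f hbd T hTtree y hy σ hσlen hσhom hσmax
end

section
/- Let n ≥ 1, let f : [ℕ]^{n+1} → {0,1} be a coloring, and let H ⊆ ℕ be an infinite set such that f is stable on H with all limits equal to 0: for every s ∈ [H]^n, f(s ∪ {y}) = 0 for all but finitely many y ∈ H. Then H contains an infinite subset H' such that f(t) = 0 for every (n+1)-element subset t of H'. -/
/-! Enumerate `H'` greedily as `a₀ < a₁ < ⋯`: `a k` is the least element of `H` above all earlier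
ones that does not give colour `1` together with any `n`-subset of `{a₀, …, a_{k-1}}`. For a fixed
finite set only finitely many elements of `H` are excluded, by stability, so the choice never fails.
Each `(n+1)`-subset of `H'` is then `insert (a k) s` with `s` an `n`-subset of the earlier terms. -/

open Finset

namespace GreedySequence

variable (H : Set ℕ) (Bad : Finset ℕ → Set ℕ)

noncomputable def next (F : Finset ℕ) : ℕ :=
  sInf (H \ (Bad F ∪ Set.Iic (F.sup id)))

noncomputable def chosen : ℕ → Finset ℕ
  | 0 => ∅
  | k + 1 => insert (next H Bad (chosen k)) (chosen k)

variable {H Bad}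

theorem next_mem (hH : H.Infinite) {F : Finset ℕ} (hBad : (Bad F).Finite) :
    next H Bad F ∈ H ∧ next H Bad F ∉ Bad F ∧ ∀ x ∈ F, x < next H Bad F := by
  have hmem := Nat.sInf_mem (hH.sdiff (hBad.union (Set.finite_Iic (F.sup id)))).nonempty
  simp only [next, Set.mem_sdiff, Set.mem_union, Set.mem_Iic, not_or, not_le] at hmem ⊢
  exact ⟨hmem.1, hmem.2.1, fun x hx => (le_sup (f := id) hx).trans_lt hmem.2.2⟩

theorem chosen_eq_image (k : ℕ) :
    chosen H Bad k = (range k).image fun j => next H Bad (chosen H Bad j) := by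
  induction k with
  | zero => rfl
  | succ k ih => rw [chosen, range_add_one, image_insert, ← ih]

theorem chosen_subset (hH : H.Infinite) (hBad : ∀ F : Finset ℕ, ↑F ⊆ H → (Bad F).Finite)
    (k : ℕ) : ↑(chosen H Bad k) ⊆ H := by
  induction k with
  | zero => simp [chosen]
  | succ k ih =>
    rw [chosen, coe_insert]
    exact Set.insert_subset (next_mem hH (hBad _ ih)).1 ih

end GreedySequence

open GreedySequence in
theorem exists_strictMono_forall_notMem_image {H : Set ℕ} (hH : H.Infinite)
    (Bad : Finset ℕ → Set ℕ) (hBad : ∀ F : Finset ℕ, ↑F ⊆ H → (Bad F).Finite) :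
    ∃ a : ℕ → ℕ, StrictMono a ∧ Set.range a ⊆ H ∧ ∀ k, a k ∉ Bad ((range k).image a) := by
  set a := fun k => next H Bad (chosen H Bad k)
  have ha k := next_mem hH (hBad _ (chosen_subset hH hBad k))
  refine ⟨a, strictMono_nat_of_lt_succ fun k => (ha (k + 1)).2.2 _ ?_,
    Set.range_subset_iff.2 fun k => (ha k).1, fun k => ?_⟩
  · exact mem_insert_self _ _
  · rw [← chosen_eq_image]
    exact (ha k).2.1

theorem Finset.exists_insert_max_eq {α : Type*} [LinearOrder α] {t : Finset α} {n : ℕ}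
    (ht : #t = n + 1) :
    ∃ y ∈ t, ∃ s ⊆ t, #s = n ∧ (∀ x ∈ s, x < y) ∧ insert y s = t := by
  have hne : t.Nonempty := card_pos.1 (by omega)
  refine ⟨t.max' hne, t.max'_mem hne, t.erase (t.max' hne), erase_subset _ _, ?_,
    fun x hx => lt_of_le_of_ne (t.le_max' x (mem_of_mem_erase hx)) (ne_of_mem_erase hx),
    insert_erase (t.max'_mem hne)⟩
  rw [card_erase_of_mem (t.max'_mem hne), ht, Nat.add_sub_cancel]

theorem StrictMono.mem_image_range_of_lt {a : ℕ → ℕ} (ha : StrictMono a) {x : ℕ}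
    (hx : x ∈ Set.range a) {k : ℕ} (hlt : x < a k) : x ∈ (range k).image a := by
  obtain ⟨j, rfl⟩ := hx
  exact mem_image_of_mem a (mem_range.2 (ha.lt_iff_lt.1 hlt))

theorem stable_limit_zero_gives_homogeneous_general
    (n : ℕ)
    (f : Finset ℕ → Fin 2)
    (H : Set ℕ) (hHinf : H.Infinite)
    (hlim : ∀ s : Finset ℕ, ↑s ⊆ H → s.card = n →
      {y : ℕ | y ∈ H ∧ (∀ x ∈ s, x < y) ∧ f (insert y s) ≠ 0}.Finite) :
    ∃ H' : Set ℕ, H' ⊆ H ∧ H'.Infinite ∧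
      ∀ t : Finset ℕ, ↑t ⊆ H' → t.card = n + 1 → f t = 0 := by
  set Bad : Finset ℕ → Set ℕ := fun F => ⋃ s ∈ F.powersetCard n,
    {y : ℕ | y ∈ H ∧ (∀ x ∈ s, x < y) ∧ f (insert y s) ≠ 0}
  have hBad (F : Finset ℕ) (hF : ↑F ⊆ H) : (Bad F).Finite :=
    (F.powersetCard n).finite_toSet.biUnion fun s hs =>
      have hs := mem_powersetCard.1 hs
      hlim s (fun x hx => hF (hs.1 hx)) hs.2
  obtain ⟨a, ha_mono, ha_sub, ha_good⟩ := exists_strictMono_forall_notMem_image hHinf Bad hBad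
  refine ⟨Set.range a, ha_sub, Set.infinite_range_of_injective ha_mono.injective, ?_⟩
  intro t ht hcard
  obtain ⟨y, hyt, s, hst, hs, hsy, rfl⟩ := exists_insert_max_eq hcard
  obtain ⟨k, rfl⟩ := ht hyt
  have hs_prefix : s ⊆ (range k).image a := fun x hx =>
    ha_mono.mem_image_range_of_lt (ht (hst hx)) (hsy x hx)
  by_contra hne
  exact ha_good k (Set.mem_biUnion (mem_powersetCard.2 ⟨hs_prefix, hs⟩) ⟨ha_sub ⟨k, rfl⟩, hsy, hne⟩)

/-- Let `f : [ℕ]^{n+1} → 2` and let `H` be an infinite set on which `f`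
is stable with all limits 0: for every `n`-element subset `s` of `H`,
`f (s ∪ {y}) = 0` for all but finitely many `y ∈ H` (with `y > max s`). Then `H`
contains an infinite subset `H'` all of whose `(n+1)`-element subsets get color 0. -/
theorem stable_limit_zero_gives_homogeneous
    (n : ℕ) (hn : 1 ≤ n)
    (f : Finset ℕ → Fin 2)
    (H : Set ℕ) (hHinf : H.Infinite)
    (hlim : ∀ s : Finset ℕ, ↑s ⊆ H → s.card = n →
      {y : ℕ | y ∈ H ∧ (∀ x ∈ s, x < y) ∧ f (insert y s) ≠ 0}.Finite) :
    ∃ H' : Set ℕ, H' ⊆ H ∧ H'.Infinite ∧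
      ∀ t : Finset ℕ, ↑t ⊆ H' → t.card = n + 1 → f t = 0 :=
  stable_limit_zero_gives_homogeneous_general n f H hHinf hlim
end
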